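/- For every positive integer n and all integers m, m′ with m ≥ α_t − t + 1 and m′ ≥ α_t − t + 1, one has 𝔡^m(I,n) = 𝔡^{m′}(I,n); that is, the function m ↦ 𝔡^m(I,n) stabilizes for m ≥ α_t − t + 1. -/

import Mathlib

open Finset

/-- Sequences of length `ℓ` (positions `1..ℓ`) with entries in `{1,…,n}`,
encoded as functions `ℕ → ℕ` vanishing outside `[1, ℓ]`. -/
def Seqs (ℓ n : ℕ) : Set (ℕ → ℕ) :=
  {v | (∀ i ∈ Finset.Icc 1 ℓ, v i ∈ Finset.Icc 1 n) ∧ ∀ i, i ∉ Finset.Icc 1 ℓ → v i = 0}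

/-- Descent set of a sequence of length `ℓ`:
`Des(v) = {i ∈ {1,…,ℓ-1} : v_i > v_{i+1}}`. -/
def Des (ℓ : ℕ) (v : ℕ → ℕ) : Set ℕ :=
  {i | 1 ≤ i ∧ i < ℓ ∧ v (i + 1) < v i}

/-- Number of occurrences of the value `j` among positions `1..ℓ` of `v`. -/
def mult (ℓ : ℕ) (v : ℕ → ℕ) (j : ℕ) : ℕ :=
  ((Finset.Icc 1 ℓ).filter fun i => v i = j).card

/-- `𝔡^m(I, n)`: the number of sequences of length `n*m`, in which each of `1,…,n`
appears exactly `m` times, whose descent set is `I`. -/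
noncomputable def dP (m : ℕ) (I : Finset ℕ) (n : ℕ) : ℕ :=
  Set.ncard {w ∈ Seqs (n * m) n |
    Des (n * m) w = ↑I ∧ ∀ j ∈ Finset.Icc 1 n, mult (n * m) w j = m}

/-- `N(I, n)`: the number of sequences `v = (v_1, …, v_{α_t})` with entries in `{1,…,n}`
such that `Des v = I \ {α_t}` and `v_{α_t} ≠ 1`. -/
noncomputable def Ncount (I : Finset ℕ) (n : ℕ) : ℕ :=
  Set.ncard {v ∈ Seqs (I.sup id) n |
    Des (I.sup id) v = ↑(I.erase (I.sup id)) ∧ v (I.sup id) ≠ 1}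

/-- `D^m(I, n)`: the number of sequences `v = (v_1, …, v_{α_t})` with entries in `{1,…,n}`
such that `Des v = I \ {α_t}` and each of `1,…,n` appears at most `m` times in `v`. -/
noncomputable def Dcount (m : ℕ) (I : Finset ℕ) (n : ℕ) : ℕ :=
  Set.ncard {v ∈ Seqs (I.sup id) n |
    Des (I.sup id) v = ↑(I.erase (I.sup id)) ∧ ∀ j ∈ Finset.Icc 1 n, mult (I.sup id) v j ≤ m}

/-- `b_i(I)`: the number of sequences `v = (v_1, …, v_{α_t})` with entries in `{1,…,i+1}`
such that `Des v = I \ {α_t}`, every number in `{2,…,i+1}` occurs in `v`, and `v_{α_t} ≠ 1`. -/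
noncomputable def bcoef (I : Finset ℕ) (i : ℕ) : ℕ :=
  Set.ncard {v ∈ Seqs (I.sup id) (i + 1) |
    Des (I.sup id) v = ↑(I.erase (I.sup id)) ∧
    (∀ l ∈ Finset.Icc 2 (i + 1), ∃ j ∈ Finset.Icc 1 (I.sup id), v j = l) ∧
    v (I.sup id) ≠ 1}

/-- `L(I)`: the length of the longest run of consecutive integers contained in `I`. -/
def longestRun (I : Finset ℕ) : ℕ :=
  I.sup fun a => ((Finset.Icc a (I.sup id)).filter fun b => Finset.Icc a b ⊆ I).card

/-- `alphaVal I k` is the `k`-th smallest element of `I` (`1`-indexed), with `alphaVal I 0 = 0`. -/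
def alphaVal (I : Finset ℕ) (k : ℕ) : ℕ :=
  if k = 0 then 0 else (I.sort (· ≤ ·)).getD (k - 1) 0

/-- For a composition `A = (a_1,…,a_s)` of `t = |I|`, `sigmaC I A i` is
`σ_{i+1} = β_{a_1+⋯+a_i+1} + ⋯ + β_{a_1+⋯+a_{i+1}}`, where `β` is the sequence of first
differences of `(0, α_1, …, α_t)`; by telescoping this equals
`α_{a_1+⋯+a_{i+1}} - α_{a_1+⋯+a_i}`. -/
def sigmaC (I : Finset ℕ) {t : ℕ} (A : Composition t) (i : ℕ) : ℕ :=
  alphaVal I (A.sizeUpTo (i + 1)) - alphaVal I (A.sizeUpTo i)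

/-- `C(A, I)` for a composition `A = (a_1,…,a_r)`: the number of sequences
`v = (v_1, …, v_{α_t})` with entries in `{1,…,r}` such that `Des v = I \ {α_t}`
and the number `j` appears exactly `a_j` times in `v`, for each `j ∈ {1,…,r}`. -/
noncomputable def Ccount (I : Finset ℕ) {N : ℕ} (A : Composition N) : ℕ :=
  Set.ncard {v ∈ Seqs (I.sup id) A.length |
    Des (I.sup id) v = ↑(I.erase (I.sup id)) ∧
    ∀ j ∈ Finset.Icc 1 A.length, mult (I.sup id) v j = A.blocks.getD (j - 1) 0}

/-- The generalized binomial coefficient `C(a, i) = a(a-1)⋯(a-i+1)/i!` for an integer `a`. -/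
def genChoose (a : ℤ) (i : ℕ) : ℚ :=
  (∏ j ∈ Finset.range i, ((a : ℚ) - (j : ℚ))) / (Nat.factorial i)

/-!
A word counted by `𝔡^m(I, n)` has no descent after `α_t`, so past that position it is the
weakly increasing arrangement of the letters still missing; it is therefore determined by its
prefix `v` of length `α_t`, which has descent set `I \ {α_t}` and, `α_t` being a descent,
`v_{α_t} ≠ 1`. Conversely, a word with `t - 1` descents uses each letter at most `α_t - t + 1`
times, and the letter `1` at most `α_t - t` times when it does not end in `1`. So for
`m ≥ α_t - t + 1` appending the missing letters in increasing order starts with a `1` and creates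
exactly the descent `α_t`, whence `𝔡^m(I, n) = N(I, n)` independently of `m`.
-/

namespace Word

def truncate (ℓ : ℕ) (f : ℕ → ℕ) (i : ℕ) : ℕ := if i ∈ Icc 1 ℓ then f i else 0

def append (α : ℕ) (v u : ℕ → ℕ) (i : ℕ) : ℕ := if i ≤ α then v i else u (i - α)

def descents (ℓ : ℕ) (v : ℕ → ℕ) : Finset ℕ := {i ∈ Ico 1 ℓ | v (i + 1) < v i}

variable {ℓ n α L i j k : ℕ} {v u f : ℕ → ℕ}

lemma coe_descents : (descents ℓ v : Set ℕ) = Des ℓ v := by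
  ext i
  simp [descents, Des, and_assoc]

lemma mult_succ : mult (ℓ + 1) v j = mult ℓ v j + if v (ℓ + 1) = j then 1 else 0 := by
  simp only [mult, card_filter]
  rw [sum_Icc_succ_top (by omega)]

lemma card_descents_succ (hℓ : 1 ≤ ℓ) :
    #(descents (ℓ + 1) v) = #(descents ℓ v) + if v (ℓ + 1) < v ℓ then 1 else 0 := by
  simp only [descents, card_filter]
  rw [sum_Ico_succ_top hℓ]

-- A step adds a copy of `j` and a descent at the same time only after a letter larger than `j`.
lemma mult_add_card_descents_le (hℓ : 1 ≤ ℓ) (v : ℕ → ℕ) (j : ℕ) :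
    mult ℓ v j + #(descents ℓ v) + (if j < v ℓ then 1 else 0) ≤ ℓ := by
  induction ℓ, hℓ using Nat.le_induction with
  | base =>
    simp only [mult, descents, Icc_self, Ico_self, filter_empty, card_empty, card_filter,
      sum_singleton]
    split_ifs <;> omega
  | succ ℓ hℓ ih =>
    rw [mult_succ, card_descents_succ hℓ]
    split_ifs at ih ⊢ <;> omega

lemma card_filter_le_eq_sum_mult (hv : ∀ i ∈ Icc 1 ℓ, 1 ≤ v i) (j : ℕ) :
    #{i ∈ Icc 1 ℓ | v i ≤ j} = ∑ l ∈ Icc 1 j, mult ℓ v l := by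
  rw [card_eq_sum_card_fiberwise (f := v) (t := Icc 1 j) fun i hi => by
    simp only [coe_filter, mem_Icc, Set.mem_ofPred_eq, coe_Icc, Set.mem_Icc] at hi ⊢
    exact ⟨hv i (mem_Icc.2 hi.1), hi.2⟩]
  refine sum_congr rfl fun l hl => ?_
  rw [filter_filter, mult]
  congr 1
  refine filter_congr fun i _ => ?_
  have := (mem_Icc.1 hl).2
  constructor <;> intro h <;> [exact h.2; exact ⟨by omega, h⟩]

lemma sum_mult (hv : ∀ i ∈ Icc 1 ℓ, v i ∈ Icc 1 n) : ∑ j ∈ Icc 1 n, mult ℓ v j = ℓ := by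
  rw [← card_filter_le_eq_sum_mult fun i hi => (mem_Icc.1 (hv i hi)).1,
    filter_true_of_mem fun i hi => (mem_Icc.1 (hv i hi)).2, Nat.card_Icc, Nat.add_sub_cancel]

lemma le_card_filter_iff {p : ℕ → Prop} [DecidablePred p]
    (hp : ∀ a ∈ Icc 1 ℓ, ∀ b ∈ Icc 1 ℓ, a ≤ b → p b → p a) (hk : k ∈ Icc 1 ℓ) :
    k ≤ #{i ∈ Icc 1 ℓ | p i} ↔ p k := by
  obtain ⟨hk1, hkℓ⟩ := mem_Icc.1 hk
  constructor
  · intro h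
    by_contra hpk
    have hsub : {i ∈ Icc 1 ℓ | p i} ⊆ Icc 1 (k - 1) := fun i hi => by
      rw [mem_filter] at hi
      refine mem_Icc.2 ⟨(mem_Icc.1 hi.1).1, ?_⟩
      by_contra hik
      exact hpk (hp k hk i hi.1 (by omega) hi.2)
    have := card_le_card hsub
    rw [Nat.card_Icc] at this
    omega
  · intro hpk
    have hsub : Icc 1 k ⊆ {i ∈ Icc 1 ℓ | p i} := fun i hi => by
      have hi' := mem_Icc.1 hi
      have hiℓ : i ∈ Icc 1 ℓ := mem_Icc.2 ⟨hi'.1, by omega⟩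
      exact mem_filter.2 ⟨hiℓ, hp i hiℓ k hk hi'.2 hpk⟩
    simpa using card_le_card hsub

lemma le_iff_le_card_filter_le (hv : MonotoneOn v (Set.Icc 1 ℓ)) (hk : k ∈ Icc 1 ℓ) (j : ℕ) :
    v k ≤ j ↔ k ≤ #{i ∈ Icc 1 ℓ | v i ≤ j} :=
  (le_card_filter_iff (fun a ha b hb hab hb' =>
    (hv (by simpa using ha) (by simpa using hb) hab).trans hb') hk).symm

lemma des_eq_empty_iff_monotoneOn : Des L u = ∅ ↔ MonotoneOn u (Set.Icc 1 L) := by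
  constructor
  · intro h
    refine monotoneOn_of_le_succ Set.ordConnected_Icc fun a _ ha hb => ?_
    rw [Order.succ_eq_add_one] at hb ⊢
    by_contra hlt
    have : a ∈ Des L u := ⟨ha.1, hb.2, by omega⟩
    simp [h] at this
  · intro h
    ext a
    simp only [Des, Set.mem_ofPred_eq, Set.mem_empty_iff_false, iff_false, not_and, not_lt]
    intro ha haL
    exact h ⟨ha, haL.le⟩ ⟨by omega, haL⟩ (by omega)

def cumCount (c : ℕ → ℕ) (j : ℕ) : ℕ := ∑ l ∈ Icc 1 j, c l

/- The weakly increasing word in which each letter `j ∈ [1, n]` occurs `c j` times: its `k`-th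
letter is the least `j` with `k ≤ cumCount c j`. -/
def sortedFill (c : ℕ → ℕ) (n k : ℕ) : ℕ := 1 + #{j ∈ Icc 1 n | cumCount c j < k}

variable {c : ℕ → ℕ}

lemma cumCount_mono (c : ℕ → ℕ) : Monotone (cumCount c) := fun _ _ h =>
  sum_le_sum_of_subset (Icc_subset_Icc_right h)

lemma sortedFill_le_iff (hj : j ≤ n) (hk : 1 ≤ k) : sortedFill c n k ≤ j ↔ k ≤ cumCount c j := by
  rcases Nat.eq_zero_or_pos j with rfl | hj1
  · simp only [sortedFill, cumCount, Icc_eq_empty_of_lt zero_lt_one, sum_empty]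
    omega
  · have := le_card_filter_iff (p := fun j' => cumCount c j' < k)
      (fun a _ b _ hab hb => (cumCount_mono c hab).trans_lt hb) (mem_Icc.2 ⟨hj1, hj⟩)
    rw [sortedFill, show ∀ x, 1 + x ≤ j ↔ ¬ j ≤ x by omega, this, not_lt]

lemma sortedFill_mono (c : ℕ → ℕ) (n : ℕ) : Monotone (sortedFill c n) := fun a b hab => by
  have : {j ∈ Icc 1 n | cumCount c j < a} ⊆ {j ∈ Icc 1 n | cumCount c j < b} :=
    monotone_filter_right _ fun j _ h => lt_of_lt_of_le h hab
  simpa [sortedFill] using card_le_card this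

lemma sortedFill_mem_Icc (hk : k ∈ Icc 1 (cumCount c n)) : sortedFill c n k ∈ Icc 1 n :=
  mem_Icc.2 ⟨by simp [sortedFill], (sortedFill_le_iff le_rfl (mem_Icc.1 hk).1).2 (mem_Icc.1 hk).2⟩

lemma mult_sortedFill (hj : j ∈ Icc 1 n) : mult (cumCount c n) (sortedFill c n) j = c j := by
  obtain ⟨hj1, hjn⟩ := mem_Icc.1 hj
  obtain ⟨i, rfl⟩ : ∃ i, j = i + 1 := ⟨j - 1, by omega⟩
  have hfiber : {k ∈ Icc 1 (cumCount c n) | sortedFill c n k = i + 1}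
      = Icc (cumCount c i + 1) (cumCount c (i + 1)) := by
    ext k
    simp only [mem_filter, mem_Icc]
    constructor
    · rintro ⟨⟨hk1, -⟩, hk⟩
      have h1 := (sortedFill_le_iff hjn hk1).1 hk.le
      have h2 := (sortedFill_le_iff (c := c) (n := n) (j := i) (by omega) hk1).not.1 (by omega)
      omega
    · rintro ⟨hk1, hk2⟩
      have h1 := (sortedFill_le_iff hjn (by omega : 1 ≤ k)).2 hk2
      have h2 := (sortedFill_le_iff (c := c) (n := n) (j := i) (by omega) (by omega : 1 ≤ k)).not.2
        (by omega)
      exact ⟨⟨by omega, hk2.trans (cumCount_mono c hjn)⟩, by omega⟩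
  rw [mult, hfiber, Nat.card_Icc]
  unfold cumCount
  rw [sum_Icc_succ_top (by omega)]
  omega

lemma eq_sortedFill_of_monotoneOn (hv : ∀ k ∈ Icc 1 L, v k ∈ Icc 1 n)
    (hmono : MonotoneOn v (Set.Icc 1 L)) (hmult : ∀ j ∈ Icc 1 n, mult L v j = c j)
    (hk : k ∈ Icc 1 L) : v k = sortedFill c n k := by
  have hle : ∀ j ≤ n, v k ≤ j ↔ sortedFill c n k ≤ j := fun j hj => by
    rw [le_iff_le_card_filter_le hmono hk, card_filter_le_eq_sum_mult fun i hi =>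
      (mem_Icc.1 (hv i hi)).1, sortedFill_le_iff hj (mem_Icc.1 hk).1, cumCount,
      sum_congr rfl fun l hl => hmult l (mem_Icc.2 ⟨(mem_Icc.1 hl).1, (mem_Icc.1 hl).2.trans hj⟩)]
  have hvk := (mem_Icc.1 (hv k hk)).2
  exact le_antisymm ((hle _ ((hle n le_rfl).1 hvk)).2 le_rfl) ((hle _ hvk).1 le_rfl)

lemma truncate_of_mem (hi : i ∈ Icc 1 ℓ) : truncate ℓ f i = f i := if_pos hi

lemma truncate_mem_seqs (hf : ∀ i ∈ Icc 1 ℓ, f i ∈ Icc 1 n) : truncate ℓ f ∈ Seqs ℓ n :=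
  ⟨fun i hi => by rw [truncate_of_mem hi]; exact hf i hi, fun _ hi => if_neg hi⟩

lemma truncate_eq_self (hv : v ∈ Seqs ℓ n) : truncate ℓ v = v := by
  funext i
  unfold truncate
  split_ifs with hi
  · rfl
  · exact (hv.2 i hi).symm

lemma mult_truncate : mult ℓ (truncate ℓ f) j = mult ℓ f j := by
  unfold mult
  congr 1
  exact filter_congr fun i hi => by rw [truncate_of_mem hi]

lemma des_truncate : Des ℓ (truncate ℓ f) = Des ℓ f := by
  ext i
  simp only [Des, Set.mem_ofPred_eq, and_congr_right_iff]
  intro h1 h2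
  rw [truncate_of_mem (mem_Icc.2 ⟨h1, h2.le⟩), truncate_of_mem (mem_Icc.2 ⟨by omega, h2⟩)]

lemma des_eq_inter_Iio (h : α ≤ ℓ) : Des α f = Des ℓ f ∩ Set.Iio α := by
  ext i
  simp only [Des, Set.mem_inter_iff, Set.mem_ofPred_eq, Set.mem_Iio]
  omega

lemma append_of_le (hi : i ≤ α) : append α v u i = v i := if_pos hi

lemma append_add (hk : 1 ≤ k) : append α v u (α + k) = u k := by
  rw [append, if_neg (by omega), Nat.add_sub_cancel_left]

lemma append_truncate_shift (hf : f ∈ Seqs (α + L) n) :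
    append α (truncate α f) (truncate L fun k => f (α + k)) = f := by
  funext i
  unfold append truncate
  split_ifs with h hi hi
  · rfl
  · exact (hf.2 i (by simp only [mem_Icc] at hi ⊢; omega)).symm
  · exact congrArg f (by omega)
  · exact (hf.2 i (by simp only [mem_Icc] at hi ⊢; omega)).symm

lemma truncate_append : truncate α (append α v u) = truncate α v := by
  funext i
  unfold truncate
  split_ifs with hi
  · exact append_of_le (mem_Icc.1 hi).2
  · rfl

lemma append_mem_seqs (hv : v ∈ Seqs α n) (hu : u ∈ Seqs L n) : append α v u ∈ Seqs (α + L) n := by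
  refine ⟨fun i hi => ?_, fun i hi => ?_⟩ <;> simp only [mem_Icc] at hi <;> unfold append <;>
    split_ifs with h
  · exact hv.1 i (mem_Icc.2 ⟨hi.1, h⟩)
  · exact hu.1 _ (mem_Icc.2 ⟨by omega, by omega⟩)
  · exact hv.2 i (by simp only [mem_Icc]; omega)
  · exact hu.2 _ (by simp only [mem_Icc]; omega)

lemma mult_append : mult (α + L) (append α v u) j = mult α v j + mult L u j := by
  induction L with
  | zero =>
    unfold mult
    simp only [Nat.add_zero, Icc_eq_empty_of_lt zero_lt_one, filter_empty, card_empty]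
    congr 1
    exact filter_congr fun i hi => by rw [append_of_le (mem_Icc.1 hi).2]
  | succ L ih =>
    rw [← add_assoc, mult_succ, ih, mult_succ, add_assoc α L 1, append_add (by omega), add_assoc]

lemma mem_des_append : i ∈ Des (α + L) (append α v u) ↔
    i ∈ Des α v ∨ (i = α ∧ 1 ≤ α ∧ 0 < L ∧ u 1 < v α) ∨ (α < i ∧ i - α ∈ Des L u) := by
  simp only [Des, Set.mem_ofPred_eq]
  rcases lt_trichotomy i α with h | rfl | h
  · rw [append_of_le h.le, append_of_le (show i + 1 ≤ α by omega)]
    omega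
  · rw [append_of_le le_rfl, append_add le_rfl]
    omega
  · rw [append, append, if_neg (by omega), if_neg (by omega), show i + 1 - α = i - α + 1 by omega]
    omega

lemma coe_erase_eq_inter_Iio {I : Finset ℕ} (hmax : ∀ x ∈ I, x ≤ α) :
    (↑(I.erase α) : Set ℕ) = ↑I ∩ Set.Iio α := by
  ext x
  simp only [coe_erase, Set.mem_sdiff, Set.mem_singleton_iff, Set.mem_inter_iff, mem_coe,
    Set.mem_Iio]
  exact ⟨fun h => ⟨h.1, lt_of_le_of_ne (hmax x h.1) h.2⟩, fun h => ⟨h.1, h.2.ne⟩⟩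

lemma truncate_mem_of_des_eq {I : Finset ℕ} {w : ℕ → ℕ} (hw : w ∈ Seqs ℓ n)
    (hDes : Des ℓ w = ↑I) (hαI : α ∈ I) (hmax : ∀ x ∈ I, x ≤ α) :
    truncate α w ∈ Seqs α n ∧ Des α (truncate α w) = ↑(I.erase α) ∧ truncate α w α ≠ 1 := by
  obtain ⟨hα1, hαℓ, hdesc⟩ : α ∈ Des ℓ w := hDes ▸ hαI
  refine ⟨truncate_mem_seqs fun i hi => hw.1 i (Icc_subset_Icc_right hαℓ.le hi), ?_, ?_⟩
  · rw [des_truncate, des_eq_inter_Iio hαℓ.le, hDes, coe_erase_eq_inter_Iio hmax]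
  · have := (mem_Icc.1 (hw.1 (α + 1) (mem_Icc.2 ⟨by omega, hαℓ⟩))).1
    rw [truncate_of_mem (mem_Icc.2 ⟨hα1, le_rfl⟩)]
    omega

def completion (m n α : ℕ) (v : ℕ → ℕ) : ℕ → ℕ :=
  append α v (truncate (n * m - α) (sortedFill (fun j => m - mult α v j) n))

lemma truncate_completion {m : ℕ} (hv : v ∈ Seqs α n) : truncate α (completion m n α v) = v := by
  rw [completion, truncate_append, truncate_eq_self hv]

lemma mult_add_ite_le_of_des_eq {I : Finset ℕ} {m : ℕ} (hDes : Des α v = ↑(I.erase α))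
    (hαI : α ∈ I) (hα1 : 1 ≤ α) (hm : α - #I + 1 ≤ m) (j : ℕ) :
    mult α v j + (if j < v α then 1 else 0) ≤ m := by
  have hcard : #(descents α v) + 1 = #I := by
    rw [Finset.coe_injective (coe_descents.trans hDes), card_erase_add_one hαI]
  have := mult_add_card_descents_le hα1 v j
  omega

lemma add_cumCount_eq {m : ℕ} (hv : ∀ i ∈ Icc 1 α, v i ∈ Icc 1 n) (hmult : ∀ j, mult α v j ≤ m) :
    α + cumCount (fun j => m - mult α v j) n = n * m := by
  have := sum_add_distrib (s := Icc 1 n) (f := fun j => mult α v j) (g := fun j => m - mult α v j)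
  rw [sum_mult hv, sum_congr rfl fun j _ => Nat.add_sub_cancel' (hmult j), sum_const,
    Nat.card_Icc, smul_eq_mul, Nat.add_sub_cancel] at this
  rw [cumCount, ← this]

lemma des_append_eq {I : Finset ℕ} (hDes : Des α v = ↑(I.erase α)) (hαI : α ∈ I) (hα1 : 1 ≤ α)
    (hL : 1 ≤ L) (hu : Des L u = ∅) (hlt : u 1 < v α) : Des (α + L) (append α v u) = ↑I := by
  ext i
  rw [mem_des_append, hu, hDes]
  simp only [coe_erase, Set.mem_sdiff, mem_coe, Set.mem_singleton_iff, Set.mem_empty_iff_false,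
    and_false, or_false]
  constructor
  · rintro (⟨hi, -⟩ | ⟨rfl, -⟩) <;> assumption
  · intro hi
    by_cases h : i = α
    · exact Or.inr ⟨h, hα1, hL, h ▸ hlt⟩
    · exact Or.inl ⟨hi, h⟩

lemma completion_mem {I : Finset ℕ} {m : ℕ} (hv : v ∈ Seqs α n) (hDes : Des α v = ↑(I.erase α))
    (hvα : v α ≠ 1) (hαI : α ∈ I) (hα1 : 1 ≤ α) (hm : α - #I + 1 ≤ m) :
    completion m n α v ∈ Seqs (n * m) n ∧ Des (n * m) (completion m n α v) = ↑I ∧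
      ∀ j ∈ Icc 1 n, mult (n * m) (completion m n α v) j = m := by
  set c : ℕ → ℕ := fun j => m - mult α v j
  have hvα' : 1 < v α := by
    have := mem_Icc.1 (hv.1 α (mem_Icc.2 ⟨hα1, le_rfl⟩))
    omega
  have hmult_le : ∀ j, mult α v j ≤ m := fun j =>
    (Nat.le_add_right _ _).trans (mult_add_ite_le_of_des_eq hDes hαI hα1 hm j)
  have hc1 : 1 ≤ c 1 := by
    have := mult_add_ite_le_of_des_eq hDes hαI hα1 hm 1
    rw [if_pos hvα'] at this
    simp only [c]
    omega
  have hn : 1 ≤ n := (mem_Icc.1 (hv.1 α (mem_Icc.2 ⟨hα1, le_rfl⟩))).2.trans' hvα'.le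
  have hlen : α + cumCount c n = n * m := add_cumCount_eq hv.1 hmult_le
  have h1 : 1 ≤ cumCount c 1 := by simpa [cumCount] using hc1
  have hL1 : 1 ≤ cumCount c n := h1.trans (cumCount_mono c hn)
  have hu1 : truncate (cumCount c n) (sortedFill c n) 1 = 1 := by
    rw [truncate_of_mem (mem_Icc.2 ⟨le_rfl, hL1⟩)]
    exact le_antisymm ((sortedFill_le_iff hn le_rfl).2 h1) (by simp [sortedFill])
  have hcompl : completion m n α v = append α v (truncate (cumCount c n) (sortedFill c n)) := by
    rw [completion, ← hlen, Nat.add_sub_cancel_left]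
  rw [hcompl, ← hlen]
  refine ⟨append_mem_seqs hv (truncate_mem_seqs fun k hk => sortedFill_mem_Icc hk), ?_,
    fun j hj => ?_⟩
  · have hsorted : Des (cumCount c n) (sortedFill c n) = ∅ :=
      des_eq_empty_iff_monotoneOn.2 ((sortedFill_mono c n).monotoneOn _)
    exact des_append_eq hDes hαI hα1 hL1 (des_truncate.trans hsorted) (by rw [hu1]; exact hvα')
  · rw [mult_append, mult_truncate, mult_sortedFill hj]
    exact Nat.add_sub_cancel' (hmult_le j)

lemma completion_truncate {I : Finset ℕ} {m : ℕ} {w : ℕ → ℕ} (hw : w ∈ Seqs (n * m) n)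
    (hDes : Des (n * m) w = ↑I) (hmult : ∀ j ∈ Icc 1 n, mult (n * m) w j = m) (hαI : α ∈ I)
    (hmax : ∀ x ∈ I, x ≤ α) : completion m n α (truncate α w) = w := by
  have hαℓ : α < n * m := (hDes ▸ hαI : α ∈ Des (n * m) w).2.1
  obtain ⟨L, hL⟩ : ∃ L, n * m = α + L := ⟨n * m - α, by omega⟩
  rw [hL] at hw hDes hmult
  set g : ℕ → ℕ := fun k => w (α + k)
  have hsplit : append α (truncate α w) (truncate L g) = w := append_truncate_shift hw
  have hgmult : ∀ j ∈ Icc 1 n, mult L g j = m - mult α w j := fun j hj => by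
    have := hmult j hj
    rw [← hsplit, mult_append, mult_truncate, mult_truncate] at this
    omega
  have hgmono : MonotoneOn g (Set.Icc 1 L) := by
    rw [← des_eq_empty_iff_monotoneOn, Set.eq_empty_iff_forall_notMem]
    intro k hk
    have hαk : α + k ∈ Des (α + L) w := by
      rw [← hsplit, mem_des_append, des_truncate (ℓ := L), Nat.add_sub_cancel_left]
      exact Or.inr (Or.inr ⟨by have := hk.1; omega, hk⟩)
    rw [hDes] at hαk
    have := hmax _ hαk
    have := hk.1
    omega
  have hg : ∀ k ∈ Icc 1 L, g k ∈ Icc 1 n := fun k hk =>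
    hw.1 (α + k) (by simp only [mem_Icc] at hk ⊢; omega)
  conv_rhs => rw [← hsplit]
  rw [completion, hL, Nat.add_sub_cancel_left]
  simp only [mult_truncate]
  congr 1
  funext k
  unfold truncate
  split_ifs with hk
  · exact (eq_sortedFill_of_monotoneOn hg hgmono hgmult hk).symm
  · rfl

end Word

open Word in
theorem dP_eq_ncount {I : Finset ℕ} (hI : I.Nonempty) (hIpos : ∀ x ∈ I, 1 ≤ x) {m n : ℕ}
    (hm : I.sup id - #I + 1 ≤ m) : dP m I n = Ncount I n := by
  set α := I.sup id
  have hαI : α ∈ I := by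
    obtain ⟨a, ha, he⟩ := exists_mem_eq_sup I hI id
    rwa [show α = a from he]
  have hmax : ∀ x ∈ I, x ≤ α := fun x hx => le_sup (f := id) hx
  have hα1 : 1 ≤ α := hIpos α hαI
  refine Set.BijOn.ncard_eq (f := truncate α) (Set.InvOn.bijOn (f' := completion m n α)
    ⟨fun w hw => completion_truncate hw.1 hw.2.1 hw.2.2 hαI hmax,
      fun v hv => truncate_completion hv.1⟩
    (fun w hw => truncate_mem_of_des_eq hw.1 hw.2.1 hαI hmax)
    (fun v hv => completion_mem hv.1 hv.2.1 hv.2.2 hαI hα1 hm))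

theorem stmt_1_general (I : Finset ℕ) (hI : I.Nonempty) (hIpos : ∀ x ∈ I, 1 ≤ x)
    (n : ℕ) (m m' : ℕ)
    (hm : I.sup id - I.card + 1 ≤ m) (hm' : I.sup id - I.card + 1 ≤ m') :
    dP m I n = dP m' I n := by
  rw [dP_eq_ncount hI hIpos hm, dP_eq_ncount hI hIpos hm']

/-- for every positive integer `n`, and all `m, m' ≥ α_t - t + 1`,
`𝔡^m(I,n) = 𝔡^{m'}(I,n)`. -/
theorem stmt_1 (I : Finset ℕ) (hI : I.Nonempty) (hIpos : ∀ x ∈ I, 1 ≤ x)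
    (n : ℕ) (hn : 1 ≤ n) (m m' : ℕ)
    (hm : I.sup id - I.card + 1 ≤ m) (hm' : I.sup id - I.card + 1 ≤ m') :
    dP m I n = dP m' I n :=
  stmt_1_general I hI hIpos n m m' hm hm'
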